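/- arXiv:1602.04354 — 3 statements merged into one kernel-verified Lean document; each statement's English description precedes it below -/
import Mathlib

section
/- Let L be a finite flag simplicial complex in which every non-maximal simplex is contained in at least two maximal simplices. Then every simplex of L is uniquely determined by the set of maximal simplices containing it; that is, if v and w are simplices of L contained in exactly the same maximal simplices, then v = w. -/
/-- An abstract simplicial complex on a vertex type `V`: a collection of finite subsets
(`faces`) closed under taking subsets. -/
structure SimplicialCpx (V : Type) where
  faces : Finset V → Prop
  down_closed : ∀ s t : Finset V, t ⊆ s → faces s → faces t
  empty_faces : faces ∅

namespace SimplicialCpx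

variable {V : Type}

/-- A maximal simplex: a face which is not a proper face of any other face. -/
def IsMaximal (L : SimplicialCpx V) (s : Finset V) : Prop :=
  L.faces s ∧ ∀ t, L.faces t → s ⊆ t → t = s

/-- A flag complex: every set of vertices which are pairwise joined spans a simplex. -/
def Flag [DecidableEq V] (L : SimplicialCpx V) : Prop :=
  ∀ s : Finset V, (∀ a ∈ s, ∀ b ∈ s, L.faces {a, b}) → L.faces s

end SimplicialCpx

/-- Every face of a finite complex is contained in a maximal simplex. -/
lemma exists_maximal_supset {V : Type} [Fintype V] [DecidableEq V] (L : SimplicialCpx V)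
    (s : Finset V) (hs : L.faces s) : ∃ m, L.IsMaximal m ∧ s ⊆ m := by
  classical
  obtain ⟨m, hm, hmax⟩ := Finset.exists_max_image
    (Finset.univ.filter fun t => L.faces t ∧ s ⊆ t) Finset.card
    ⟨s, by simp [hs]⟩
  simp only [Finset.mem_filter, Finset.mem_univ, true_and] at hm hmax
  refine ⟨m, ⟨hm.1, fun t ht hmt => ?_⟩, hm.2⟩
  exact (Finset.eq_of_subset_of_card_le hmt (hmax t ⟨ht, hm.2.trans hmt⟩)).symm

/-- If `s` and `insert x s` are faces with `x ∉ s`, and every non-maximal face lies in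
two distinct maximal simplices, then some maximal simplex contains `s` but not `x`. -/
lemma exists_maximal_avoiding {V : Type} [Fintype V] [DecidableEq V] (L : SimplicialCpx V)
    (htwo : ∀ s, L.faces s → ¬ L.IsMaximal s →
      ∃ m₁ m₂, L.IsMaximal m₁ ∧ L.IsMaximal m₂ ∧ m₁ ≠ m₂ ∧ s ⊆ m₁ ∧ s ⊆ m₂)
    (s : Finset V) (x : V) (hx : x ∉ s) (hxs : L.faces (insert x s)) :
    ∃ m, L.IsMaximal m ∧ s ⊆ m ∧ x ∉ m := by
  classical
  -- take a maximum-cardinality face t ⊇ s with x ∉ t and insert x t a face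
  obtain ⟨t, ht, hmaxt⟩ := Finset.exists_max_image
    (Finset.univ.filter fun t => L.faces t ∧ s ⊆ t ∧ x ∉ t ∧ L.faces (insert x t))
    Finset.card
    ⟨s, by simp [hx, hxs, L.down_closed _ s (Finset.subset_insert x s) hxs]⟩
  simp only [Finset.mem_filter, Finset.mem_univ, true_and] at ht hmaxt
  obtain ⟨htf, hst, hxt, hxtf⟩ := ht
  -- claim: some maximal simplex containing t avoids x
  by_contra hcon
  push_neg at hcon
  -- t is not maximal since insert x t is a strictly larger face
  have htnm : ¬ L.IsMaximal t := by
    rintro ⟨-, hmax⟩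
    have := hmax (insert x t) hxtf (Finset.subset_insert x t)
    exact hxt (this ▸ Finset.mem_insert_self x t)
  obtain ⟨m₁, m₂, hm₁, hm₂, hne, htm₁, htm₂⟩ := htwo t htf htnm
  have hxm₁ : x ∈ m₁ := hcon m₁ hm₁ (hst.trans htm₁)
  have hxm₂ : x ∈ m₂ := hcon m₂ hm₂ (hst.trans htm₂)
  -- m₁ ⊄ m₂, pick a ∈ m₁ \ m₂ and enlarge t, contradicting maximality of t
  have hnsub : ¬ m₁ ⊆ m₂ := fun h => hne (hm₁.2 m₂ hm₂.1 h).symm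
  obtain ⟨a, ham₁, ham₂⟩ := Finset.not_subset.mp hnsub
  have hax : a ≠ x := fun h => ham₂ (h ▸ hxm₂)
  have hat : a ∉ t := fun h => ham₂ (htm₂ h)
  have h1 : L.faces (insert a t) :=
    L.down_closed m₁ _ (Finset.insert_subset ham₁ htm₁) hm₁.1
  have h2 : L.faces (insert x (insert a t)) := by
    refine L.down_closed m₁ _ ?_ hm₁.1
    exact Finset.insert_subset hxm₁ (Finset.insert_subset ham₁ htm₁)
  have hcard := hmaxt (insert a t)
    ⟨h1, hst.trans (Finset.subset_insert a t),
      by simp [Finset.mem_insert, hax.symm, hxt], h2⟩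
  rw [Finset.card_insert_of_notMem hat] at hcard
  omega

/-- If `L` is a finite flag simplicial complex in which every non-maximal simplex is
contained in at least two maximal simplices, then every simplex of `L` is uniquely
determined by the set of maximal simplices containing it. -/
theorem stmt3 {V : Type} [Fintype V] [DecidableEq V] (L : SimplicialCpx V) (hflag : L.Flag)
    (htwo : ∀ s, L.faces s → ¬ L.IsMaximal s →
      ∃ m₁ m₂, L.IsMaximal m₁ ∧ L.IsMaximal m₂ ∧ m₁ ≠ m₂ ∧ s ⊆ m₁ ∧ s ⊆ m₂)
    (v w : Finset V) (hv : L.faces v) (hw : L.faces w)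
    (hsame : ∀ m, L.IsMaximal m → (v ⊆ m ↔ w ⊆ m)) :
    v = w := by
  have key : ∀ a b : Finset V, L.faces a → L.faces b →
      (∀ m, L.IsMaximal m → (a ⊆ m ↔ b ⊆ m)) → a ⊆ b := by
    intro a b ha hb hab
    intro x hxa
    by_contra hxb
    have hbx : L.faces (insert x b) := by
      obtain ⟨m, hm, hbm⟩ := exists_maximal_supset L b hb
      have ham : a ⊆ m := (hab m hm).mpr hbm
      exact L.down_closed m _ (Finset.insert_subset (ham hxa) hbm) hm.1
    obtain ⟨m, hm, hbm, hxm⟩ := exists_maximal_avoiding L htwo b x hxb hbx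
    exact hxm (((hab m hm).mpr hbm) hxa)
  exact Finset.Subset.antisymm (key v w hv hw hsame)
    (key w v hw hv fun m hm => (hsame m hm).symm)
end

section
/- Let L be a finite flag simplicial complex such that every non-maximal simplex of L is contained in at least two maximal simplices. Let u, v be simplices of L with u a proper face of v. Then for every simplex w of L, if v ∪ w is a simplex of L then u ∪ w is a simplex of L, and there exists a simplex w such that u ∪ w is a simplex of L but v ∪ w is not. -/
/-- Let `L` be a finite flag simplicial complex such that every non-maximal simplex is
contained in at least two maximal simplices, and let `u` be a proper face of `v`.  Then
for every simplex `w`, if `v ∪ w` is a simplex then so is `u ∪ w`, and there is a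
simplex `w` with `u ∪ w` a simplex but `v ∪ w` not a simplex. -/
theorem stmt4 {V : Type} [Fintype V] [DecidableEq V] (L : SimplicialCpx V) (hflag : L.Flag)
    (htwo : ∀ s, L.faces s → ¬ L.IsMaximal s →
      ∃ m₁ m₂, L.IsMaximal m₁ ∧ L.IsMaximal m₂ ∧ m₁ ≠ m₂ ∧ s ⊆ m₁ ∧ s ⊆ m₂)
    (u v : Finset V) (hu : L.faces u) (hv : L.faces v) (huv : u ⊂ v) :
    (∀ w, L.faces w → L.faces (v ∪ w) → L.faces (u ∪ w)) ∧
    (∃ w, L.faces w ∧ L.faces (u ∪ w) ∧ ¬ L.faces (v ∪ w)) := by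
  obtain ⟨x, hxv, hxu⟩ := Finset.exists_of_ssubset huv
  refine ⟨fun w _ hvw => L.down_closed _ _ (Finset.union_subset_union_left huv.subset) hvw, ?_⟩
  by_contra hcon
  push_neg at hcon
  -- hcon : ∀ w, L.faces w → L.faces (u ∪ w) → L.faces (v ∪ w)
  have hunotmax : ¬ L.IsMaximal u := fun hm => huv.ne (hm.2 v hv huv.subset).symm
  have key : ∀ m', L.IsMaximal m' → u ⊆ m' → x ∈ m' := by
    intro m' hm' hum'
    have h1 : L.faces (u ∪ m') := L.down_closed m' _ (Finset.union_subset hum' le_rfl) hm'.1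
    have h2 := hcon m' hm'.1 h1
    have h3 := hm'.2 (v ∪ m') h2 Finset.subset_union_right
    have hvm : v ⊆ m' := h3 ▸ Finset.subset_union_left
    exact hvm hxv
  obtain ⟨m, -, hm, -, -, hum, -⟩ := htwo u hu hunotmax
  have hxm : x ∈ m := key m hm hum
  have hs : L.faces (m.erase x) := L.down_closed m _ (Finset.erase_subset _ _) hm.1
  have hsnot : ¬ L.IsMaximal (m.erase x) := by
    intro hmax
    have heq := hmax.2 m hm.1 (Finset.erase_subset _ _)
    exact Finset.erase_eq_self.mp heq.symm hxm
  obtain ⟨m₁, m₂, h1, h2, hne, hs1, hs2⟩ := htwo _ hs hsnot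
  have hue : u ⊆ m.erase x := Finset.subset_erase.mpr ⟨hum, hxu⟩
  have hmsub : ∀ m' , L.IsMaximal m' → m.erase x ⊆ m' → m' = m := by
    intro m' hm' hsm'
    have hx' : x ∈ m' := key m' hm' (hue.trans hsm')
    have : m ⊆ m' := by
      intro y hy
      by_cases hyx : y = x
      · exact hyx ▸ hx'
      · exact hsm' (Finset.mem_erase.mpr ⟨hyx, hy⟩)
    exact hm.2 m' hm'.1 this
  exact hne ((hmsub m₁ h1 hs1).trans (hmsub m₂ h2 hs2).symm)
end

section
/- Let L be a finite flag simplicial complex such that every non-maximal simplex is contained in at least two maximal simplices. For simplices u, v of L, one has u ⊆ v if and only if {w : w a simplex of L with u ∪ w a simplex of L} ⊇ {w : w a simplex of L with v ∪ w a simplex of L}. Consequently, any bijection of the set of simplices of L that preserves the partial operation of symmetric difference (u, v) ↦ u Δ v (defined whenever u, v, u Δ v are all simplices) preserves inclusion of simplices. -/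
/-- The induced self-map of the finite set of related pairs is injective, hence surjective. -/
theorem Set.BijOn.rel_of_rel_apply {α : Type*} {s : Set α} (hs : s.Finite) {f : α → α}
    (hf : Set.BijOn f s s) {r : α → α → Prop}
    (hr : ∀ x ∈ s, ∀ y ∈ s, r x y → r (f x) (f y)) {x y : α} (hx : x ∈ s) (hy : y ∈ s)
    (hxy : r (f x) (f y)) : r x y := by
  set R : Set (α × α) := {p | p.1 ∈ s ∧ p.2 ∈ s ∧ r p.1 p.2}
  have hR : R.Finite := (hs.prod hs).subset fun p hp => ⟨hp.1, hp.2.1⟩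
  have hmaps : Set.MapsTo (Prod.map f f) R R := fun p ⟨h₁, h₂, hp⟩ =>
    ⟨hf.mapsTo h₁, hf.mapsTo h₂, hr _ h₁ _ h₂ hp⟩
  have hinj : Set.InjOn (Prod.map f f) R := fun p ⟨h₁, h₂, _⟩ q ⟨h₁', h₂', _⟩ hpq =>
    Prod.ext (hf.injOn h₁ h₁' (congrArg Prod.fst hpq)) (hf.injOn h₂ h₂' (congrArg Prod.snd hpq))
  obtain ⟨⟨x', y'⟩, ⟨hx', hy', hr'⟩, heq⟩ :=
    ((hR.injOn_iff_bijOn_of_mapsTo hmaps).1 hinj).surjOn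
      (show (f x, f y) ∈ R from ⟨hf.mapsTo hx, hf.mapsTo hy, hxy⟩)
  rwa [hf.injOn hx' hx (congrArg Prod.fst heq), hf.injOn hy' hy (congrArg Prod.snd heq)] at hr'

namespace SimplicialCpx

variable {V : Type} (L : SimplicialCpx V)

theorem exists_isMaximal_superset [Finite V] {s : Finset V} (hs : L.faces s) :
    ∃ m, L.IsMaximal m ∧ s ⊆ m := by
  obtain ⟨m, hsm, hm⟩ := Finite.exists_le_maximal hs
  exact ⟨m, ⟨hm.prop, fun t ht hmt => le_antisymm (hm.2 ht hmt) hmt⟩, hsm⟩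

/-- If `a ∉ s` and `m ⊇ s` is maximal, the non-maximal face `m.erase a` would lie in no maximal
simplex other than `m`. -/
theorem mem_of_forall_isMaximal [Finite V] [DecidableEq V]
    (htwo : ∀ s, L.faces s → ¬ L.IsMaximal s →
      ∃ m₁ m₂, L.IsMaximal m₁ ∧ L.IsMaximal m₂ ∧ m₁ ≠ m₂ ∧ s ⊆ m₁ ∧ s ⊆ m₂)
    {s : Finset V} (hs : L.faces s) {a : V} (ha : ∀ m, L.IsMaximal m → s ⊆ m → a ∈ m) :
    a ∈ s := by
  by_contra has
  obtain ⟨m, hm, hsm⟩ := L.exists_isMaximal_superset hs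
  have ham : a ∈ m := ha m hm hsm
  have hs_erase : s ⊆ m.erase a := Finset.subset_erase.2 ⟨hsm, has⟩
  have h_erase_face : L.faces (m.erase a) := L.down_closed m _ (Finset.erase_subset a m) hm.1
  have h_erase_not_max : ¬ L.IsMaximal (m.erase a) := fun h =>
    Finset.notMem_erase a m (h.2 m hm.1 (Finset.erase_subset a m) ▸ ham)
  have h_unique : ∀ m', L.IsMaximal m' → m.erase a ⊆ m' → m' = m := fun m' hm' hsub =>
    hm.2 m' hm'.1 <| Finset.insert_erase ham ▸
      Finset.insert_subset (ha m' hm' (hs_erase.trans hsub)) hsub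
  obtain ⟨m₁, m₂, hm₁, hm₂, hne, h₁, h₂⟩ := htwo _ h_erase_face h_erase_not_max
  exact hne ((h_unique m₁ hm₁ h₁).trans (h_unique m₂ hm₂ h₂).symm)

theorem subset_iff_compatible_subset [Finite V] [DecidableEq V]
    (htwo : ∀ s, L.faces s → ¬ L.IsMaximal s →
      ∃ m₁ m₂, L.IsMaximal m₁ ∧ L.IsMaximal m₂ ∧ m₁ ≠ m₂ ∧ s ⊆ m₁ ∧ s ⊆ m₂)
    {u v : Finset V} (hv : L.faces v) :
    u ⊆ v ↔ {w : Finset V | L.faces w ∧ L.faces (v ∪ w)} ⊆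
      {w : Finset V | L.faces w ∧ L.faces (u ∪ w)} := by
  refine ⟨fun huv w hw => ⟨hw.1, L.down_closed _ _ (Finset.union_subset_union_left huv) hw.2⟩,
    fun h a hau => L.mem_of_forall_isMaximal htwo hv fun m hm hvm => ?_⟩
  have hum : L.faces (u ∪ m) := (h ⟨hm.1, by rw [Finset.union_eq_right.2 hvm]; exact hm.1⟩).2
  exact hm.2 _ hum Finset.subset_union_right ▸ Finset.mem_union_left m hau

theorem faces_union_iff_faces_symmDiff [DecidableEq V] (hflag : L.Flag) {u v : Finset V}
    (hu : L.faces u) (hv : L.faces v) : L.faces (u ∪ v) ↔ L.faces (symmDiff u v) := by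
  refine ⟨L.down_closed _ _ symmDiff_le_sup, fun hd => hflag _ fun a ha b hb => ?_⟩
  have pair : ∀ w : Finset V, L.faces w → a ∈ w → b ∈ w → L.faces {a, b} := fun w hw haw hbw =>
    L.down_closed w _ (Finset.insert_subset haw (Finset.singleton_subset_iff.2 hbw)) hw
  rw [Finset.mem_union] at ha hb
  by_cases hau : a ∈ u <;> by_cases hav : a ∈ v <;> by_cases hbu : b ∈ u <;> by_cases hbv : b ∈ v
  all_goals first
    | exact pair u hu ‹_› ‹_›
    | exact pair v hv ‹_› ‹_›
    | exact pair _ hd (Finset.mem_symmDiff.2 (by tauto)) (Finset.mem_symmDiff.2 (by tauto))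

theorem faces_union_apply_iff [Finite V] [DecidableEq V] (hflag : L.Flag) {φ : Finset V → Finset V}
    (hbij : Set.BijOn φ {s | L.faces s} {s | L.faces s})
    (hpres : ∀ u v, L.faces u → L.faces v → L.faces (symmDiff u v) →
      L.faces (symmDiff (φ u) (φ v)))
    {u v : Finset V} (hu : L.faces u) (hv : L.faces v) :
    L.faces (φ u ∪ φ v) ↔ L.faces (u ∪ v) := by
  rw [L.faces_union_iff_faces_symmDiff hflag hu hv,
    L.faces_union_iff_faces_symmDiff hflag (hbij.mapsTo hu) (hbij.mapsTo hv)]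
  exact ⟨hbij.rel_of_rel_apply (Set.toFinite _) (r := fun a b => L.faces (symmDiff a b))
    (fun a ha b hb => hpres a b ha hb) hu hv, hpres u v hu hv⟩

end SimplicialCpx

/-- In a finite flag complex where every non-maximal simplex lies in at least two maximal
simplices: `u ⊆ v` iff the set of simplices compatible with `v` is contained in the set of
simplices compatible with `u`; consequently any bijection of the simplices preserving the
partial symmetric-difference operation preserves inclusion. -/
theorem stmt5 {V : Type} [Fintype V] [DecidableEq V] (L : SimplicialCpx V) (hflag : L.Flag)
    (htwo : ∀ s, L.faces s → ¬ L.IsMaximal s →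
      ∃ m₁ m₂, L.IsMaximal m₁ ∧ L.IsMaximal m₂ ∧ m₁ ≠ m₂ ∧ s ⊆ m₁ ∧ s ⊆ m₂) :
    (∀ u v : Finset V, L.faces u → L.faces v →
      (u ⊆ v ↔ {w : Finset V | L.faces w ∧ L.faces (v ∪ w)} ⊆
        {w : Finset V | L.faces w ∧ L.faces (u ∪ w)})) ∧
    (∀ φ : Finset V → Finset V,
      Set.BijOn φ {s : Finset V | L.faces s} {s : Finset V | L.faces s} →
      (∀ u v : Finset V, L.faces u → L.faces v → L.faces (symmDiff u v) →
        L.faces (symmDiff (φ u) (φ v)) ∧ φ (symmDiff u v) = symmDiff (φ u) (φ v)) →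
      ∀ u v : Finset V, L.faces u → L.faces v → u ⊆ v → φ u ⊆ φ v) := by
  refine ⟨fun u v _ hv => L.subset_iff_compatible_subset htwo hv,
    fun φ hbij hpres u v hu hv huv => ?_⟩
  have hunion : ∀ {a b}, L.faces a → L.faces b → (L.faces (φ a ∪ φ b) ↔ L.faces (a ∪ b)) :=
    L.faces_union_apply_iff hflag hbij fun a b ha hb hab => (hpres a b ha hb hab).1
  rw [L.subset_iff_compatible_subset htwo (hbij.mapsTo hv)]
  rintro _ ⟨hw, hvw⟩
  obtain ⟨w, hw', rfl⟩ := hbij.surjOn hw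
  refine ⟨hw, (hunion hu hw').2 ?_⟩
  exact L.down_closed _ _ (Finset.union_subset_union_left huv) ((hunion hv hw').1 hvw)
end
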